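/- The 4×4 matrix H = [[-3iγ, √3, 0, 0], [√3, -iγ, 2, 0], [0, 2, iγ, √3], [0, 0, √3, 3iγ]] has eigenvalues ±(2±1)√(1-γ²), i.e., ±√(1-γ²) and ±3√(1-γ²), for real γ with |γ| < 1. -/
import Mathlib

open Complex Matrix

theorem stmt8 (γ : ℝ) (hγ : |γ| < 1) :
    spectrum ℂ
      (!![-3 * I * γ, (Real.sqrt 3 : ℂ), 0, 0;
          (Real.sqrt 3 : ℂ), -(I * γ), 2, 0;
          0, 2, I * γ, (Real.sqrt 3 : ℂ);
          0, 0, (Real.sqrt 3 : ℂ), 3 * I * γ] : Matrix (Fin 4) (Fin 4) ℂ)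
      = {((Real.sqrt (1 - γ ^ 2) : ℝ) : ℂ), ((-Real.sqrt (1 - γ ^ 2) : ℝ) : ℂ),
         ((3 * Real.sqrt (1 - γ ^ 2) : ℝ) : ℂ), ((-(3 * Real.sqrt (1 - γ ^ 2)) : ℝ) : ℂ)} := by
  set M : Matrix (Fin 4) (Fin 4) ℂ :=
      !![-3 * I * γ, (Real.sqrt 3 : ℂ), 0, 0;
          (Real.sqrt 3 : ℂ), -(I * γ), 2, 0;
          0, 2, I * γ, (Real.sqrt 3 : ℂ);
          0, 0, (Real.sqrt 3 : ℂ), 3 * I * γ] with hM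
  set s : ℝ := Real.sqrt (1 - γ ^ 2) with hsdef
  have h1 : (0:ℝ) ≤ 1 - γ ^ 2 := by
    nlinarith [abs_nonneg γ, _root_.sq_abs γ, abs_lt.mp hγ]
  have hs : (s : ℂ) ^ 2 = 1 - (γ:ℂ) ^ 2 := by
    rw [hsdef, ← Complex.ofReal_pow, Real.sq_sqrt h1]; push_cast; ring
  have h3 : ((Real.sqrt 3 : ℝ) : ℂ) ^ 2 = 3 := by
    rw [← Complex.ofReal_pow, Real.sq_sqrt (by norm_num : (0:ℝ) ≤ 3)]; norm_num
  have hI : (I:ℂ) ^ 2 = -1 := Complex.I_sq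
  ext x
  have hmat : (algebraMap ℂ (Matrix (Fin 4) (Fin 4) ℂ)) x - M =
      !![x + 3*I*γ, -(Real.sqrt 3 : ℂ), 0, 0;
         -(Real.sqrt 3 : ℂ), x + I*γ, -2, 0;
         0, -2, x - I*γ, -(Real.sqrt 3 : ℂ);
         0, 0, -(Real.sqrt 3 : ℂ), x - 3*I*γ] := by
    ext i j
    fin_cases i <;> fin_cases j <;>
      simp [Matrix.algebraMap_matrix_apply, hM, Matrix.sub_apply, Matrix.vecHead, Matrix.vecTail]
  have hdet : ((algebraMap ℂ (Matrix (Fin 4) (Fin 4) ℂ)) x - M).det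
      = (x - s) * (x + s) * (x - 3*s) * (x + 3*s) := by
    rw [hmat]
    simp [Matrix.det_succ_row_zero, Fin.sum_univ_succ, Matrix.det_fin_three, Fin.succAbove]
    linear_combination (3 + ((Real.sqrt 3:ℝ):ℂ)^2 - 6*(γ:ℂ)^2*I^2 - 2*x^2) * h3
      + (18*(γ:ℂ)^2 - 9*(γ:ℂ)^4 + 9*(γ:ℂ)^4*I^2 - 10*x^2*(γ:ℂ)^2) * hI
      + (-9 - 9*((s:ℝ):ℂ)^2 + 9*(γ:ℂ)^2 + 10*x^2) * hs
  rw [spectrum.mem_iff, Matrix.isUnit_iff_isUnit_det, isUnit_iff_ne_zero, not_not, hdet]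
  simp only [mul_eq_zero, sub_eq_zero, add_eq_zero_iff_eq_neg, Set.mem_insert_iff,
    Set.mem_singleton_iff]
  push_cast
  constructor
  · rintro (((h | h) | h) | h) <;> simp [h]
  · rintro (h | h | h | h) <;> simp [h]
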